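/- arXiv:2602.01177 — 2 statements merged into one kernel-verified Lean document; each statement's English description precedes it below -/
import Mathlib

section
/- For density operators ρ, ρ', σ on a finite-dimensional Hilbert space (with appropriate support conditions), the quantum relative entropy satisfies D(ρ‖σ) ≤ D(ρ‖ρ') + D_max(ρ'‖σ), where D_max(ρ'‖σ) is the smallest λ such that ρ' ≤ e^λ σ. -/
open Matrix
open scoped ComplexOrder

variable {d : Type*} [Fintype d] [DecidableEq d]

/-- Apply a real function to a Hermitian matrix via the spectral theorem
(junk value `0` for non-Hermitian matrices). -/
noncomputable def matFun (f : ℝ → ℝ) (A : Matrix d d ℂ) : Matrix d d ℂ :=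
  if hA : A.IsHermitian then
    (hA.eigenvectorUnitary : Matrix d d ℂ) *
      Matrix.diagonal (fun i => (f (hA.eigenvalues i) : ℂ)) *
      (star (hA.eigenvectorUnitary : Matrix d d ℂ))
  else 0

/-- Matrix logarithm (via spectral calculus, with `Real.log 0 = 0` on the kernel). -/
noncomputable def mlog (A : Matrix d d ℂ) : Matrix d d ℂ := matFun Real.log A

/-- Quantum (Umegaki) relative entropy `D(ρ‖σ) = Tr[ρ(log ρ − log σ)]`. -/
noncomputable def qRelEnt (ρ σ : Matrix d d ℂ) : ℝ :=
  (Matrix.trace (ρ * (mlog ρ - mlog σ))).re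

/-- `ρ` is a density operator. -/
def IsDensity (ρ : Matrix d d ℂ) : Prop := ρ.PosSemidef ∧ Matrix.trace ρ = 1

/-- `supp ρ ⊆ supp σ`, stated as `ker σ ⊆ ker ρ`. -/
def SuppLE (ρ σ : Matrix d d ℂ) : Prop := ∀ v : d → ℂ, σ.mulVec v = 0 → ρ.mulVec v = 0

/-- Max-relative entropy `D_max(ρ‖σ) = inf {λ | ρ ≤ e^λ σ}`. -/
noncomputable def Dmax (ρ σ : Matrix d d ℂ) : ℝ :=
  sInf {lam : ℝ | (Real.exp lam • σ - ρ).PosSemidef}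

namespace QRE

/-- `A = U diag(g) U*` with `U` unitary and `g` real. -/
def Dec (U : Matrix d d ℂ) (g : d → ℝ) (A : Matrix d d ℂ) : Prop :=
  U ∈ Matrix.unitaryGroup d ℂ ∧ A = U * diagonal (fun i => (g i : ℂ)) * star U

lemma dec_spectral {A : Matrix d d ℂ} (hA : A.IsHermitian) :
    Dec (hA.eigenvectorUnitary : Matrix d d ℂ) hA.eigenvalues A := by
  refine ⟨(hA.eigenvectorUnitary).2, ?_⟩
  convert hA.spectral_theorem using 3
  rw [Unitary.conjStarAlgAut_apply]; rfl

namespace Dec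
variable {U : Matrix d d ℂ} {g : d → ℝ} {A : Matrix d d ℂ}

lemma star_mul_self (h : Dec U g A) : star U * U = 1 :=
  (Matrix.mem_unitaryGroup_iff').mp h.1
lemma mul_star_self (h : Dec U g A) : U * star U = 1 :=
  (Matrix.mem_unitaryGroup_iff).mp h.1

lemma isHermitian (h : Dec U g A) : A.IsHermitian := by
  have hD : (diagonal (fun i => (g i : ℂ)))ᴴ = diagonal (fun i => (g i : ℂ)) := by
    rw [diagonal_conjTranspose]; congr 1; ext i
    simp [Pi.star_def, Complex.conj_ofReal]
  unfold Matrix.IsHermitian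
  rw [h.2]
  simp only [star_eq_conjTranspose, conjTranspose_mul, conjTranspose_conjTranspose, hD,
    Matrix.mul_assoc]

lemma mulVec_eq (h : Dec U g A) (w : d → ℂ) :
    A *ᵥ (U *ᵥ w) = U *ᵥ (fun i => (g i : ℂ) * w i) := by
  rw [h.2, mulVec_mulVec]
  have key : U * diagonal (fun i => (g i : ℂ)) * star U * U = U * diagonal (fun i => (g i : ℂ)) := by
    rw [Matrix.mul_assoc (U * _), h.star_mul_self, Matrix.mul_one]
  rw [key]
  ext i
  simp only [mulVec, mul_apply, dotProduct, diagonal, of_apply, mul_ite, ite_mul,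
    mul_zero, zero_mul, Finset.sum_ite_eq, Finset.mem_univ, if_true]
  exact Finset.sum_congr rfl fun j _ => by
    rw [Finset.sum_ite_eq' Finset.univ j (fun x => U i x * (g x : ℂ))]
    simp; ring

lemma qf (h : Dec U g A) (v : d → ℂ) :
    star v ⬝ᵥ A *ᵥ v =
      ((∑ i, g i * Complex.normSq ((star U *ᵥ v) i) : ℝ) : ℂ) := by
  rw [h.2]
  rw [← mulVec_mulVec, ← mulVec_mulVec, dotProduct_mulVec]
  have hw : star v ᵥ* U = star (star U *ᵥ v) := by
    rw [star_mulVec, star_eq_conjTranspose, conjTranspose_conjTranspose]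
  rw [hw]
  set w := star U *ᵥ v
  push_cast
  simp only [dotProduct, mulVec_diagonal, Pi.star_apply, Complex.normSq_eq_conj_mul_self,
    RCLike.star_def]
  congr 1; ext i; ring

lemma trace_mul (h : Dec U g A) (ρ : Matrix d d ℂ) :
    Matrix.trace (ρ * A) = ∑ i, (g i : ℂ) * ((star U * ρ * U) i i) := by
  rw [h.2]
  have h1 : ρ * (U * diagonal (fun i => (g i : ℂ)) * star U)
      = (ρ * U * diagonal (fun i => (g i : ℂ))) * star U := by
    noncomm_ring
  rw [h1, Matrix.trace_mul_comm, ← Matrix.mul_assoc, ← Matrix.mul_assoc]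
  simp only [Matrix.trace, Matrix.diag, mul_apply, diagonal, of_apply, mul_ite, mul_zero,
    Finset.sum_ite_eq', Finset.mem_univ, if_true]
  exact Finset.sum_congr rfl fun i _ => by ring

end Dec

lemma diag_entry_qf (U ρ : Matrix d d ℂ) (i : d) :
    (star U * ρ * U) i i = star (fun a => U a i) ⬝ᵥ ρ *ᵥ (fun a => U a i) := by
  simp only [mul_apply, dotProduct, mulVec, star_apply, Pi.star_apply,
    star_eq_conjTranspose, conjTranspose_apply]
  simp only [Finset.sum_mul, Finset.mul_sum]
  rw [Finset.sum_comm]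
  exact Finset.sum_congr rfl fun a _ => Finset.sum_congr rfl fun b _ => by ring

lemma entry_re_nonneg {ρ : Matrix d d ℂ} (hρ : ρ.PosSemidef) (U : Matrix d d ℂ) (i : d) :
    0 ≤ ((star U * ρ * U) i i).re := by
  rw [diag_entry_qf]
  have := hρ.dotProduct_mulVec_nonneg (fun a => U a i)
  have h0 := (Complex.le_def.mp this).1
  simpa using h0

lemma entry_eq_zero {ρ : Matrix d d ℂ} (U : Matrix d d ℂ) (i : d)
    (h : ρ *ᵥ (fun a => U a i) = 0) : (star U * ρ * U) i i = 0 := by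
  rw [diag_entry_qf, h]
  simp

/-- Conjugation by a unitary as an algebra homomorphism. -/
noncomputable def conjAH (U : Matrix d d ℂ) (hU : U ∈ Matrix.unitaryGroup d ℂ) :
    Matrix d d ℂ →ₐ[ℂ] Matrix d d ℂ where
  toFun M := U * M * star U
  map_one' := by
    show U * 1 * star U = 1
    rw [Matrix.mul_one]; exact (Matrix.mem_unitaryGroup_iff).mp hU
  map_mul' M N := by
    show U * (M * N) * star U = (U * M * star U) * (U * N * star U)
    have h1 : star U * U = 1 := (Matrix.mem_unitaryGroup_iff').mp hU
    calc U * (M * N) * star U = U * M * (star U * U) * N * star U := by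
          rw [h1]; noncomm_ring
      _ = (U * M * star U) * (U * N * star U) := by noncomm_ring
  map_zero' := by simp
  map_add' M N := by noncomm_ring
  commutes' c := by
    show U * (algebraMap ℂ (Matrix d d ℂ) c) * star U = algebraMap ℂ (Matrix d d ℂ) c
    simp only [Algebra.algebraMap_eq_smul_one]
    rw [Matrix.mul_smul, Matrix.mul_one, Matrix.smul_mul]
    congr 1
    exact (Matrix.mem_unitaryGroup_iff).mp hU

lemma eval_ofReal_map (p : Polynomial ℝ) (x : ℝ) :
    (p.map (algebraMap ℝ ℂ)).eval ((x : ℝ) : ℂ) = ((p.eval x : ℝ) : ℂ) := by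
  rw [Polynomial.eval_map]
  exact Polynomial.eval₂_at_apply (algebraMap ℝ ℂ) x

lemma aeval_dec {U : Matrix d d ℂ} {g : d → ℝ} {A : Matrix d d ℂ} (h : Dec U g A)
    (p : Polynomial ℝ) :
    Polynomial.aeval A (p.map (algebraMap ℝ ℂ)) =
      U * diagonal (fun i => ((p.eval (g i) : ℝ) : ℂ)) * star U := by
  set q := p.map (algebraMap ℝ ℂ)
  have h2 : A = conjAH U h.1 (diagonal (fun i => (g i : ℂ))) := h.2
  rw [h2, Polynomial.aeval_algHom_apply]
  have h3 : Polynomial.aeval (diagonal (fun i => (g i : ℂ))) q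
      = diagonal (fun i => q.eval ((g i : ℝ) : ℂ)) := by
    have := Polynomial.aeval_algHom_apply (Matrix.diagonalAlgHom (n := d) ℂ)
      (fun i => (g i : ℂ)) q
    simp only [Matrix.diagonalAlgHom_apply] at this
    rw [this]
    have hfun : (Polynomial.aeval fun i => ((g i : ℝ) : ℂ)) q
        = fun i => q.eval ((g i : ℝ) : ℂ) := by
      funext i
      rw [Polynomial.aeval_fn_apply]
      simp [Polynomial.aeval_def, Polynomial.eval₂_eq_eval_map, Polynomial.map_id]
    rw [hfun]
  rw [h3]
  have h4 : (fun i => q.eval ((g i : ℝ) : ℂ)) = fun i => ((p.eval (g i) : ℝ) : ℂ) := by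
    ext i; exact eval_ofReal_map p (g i)
  rw [h4]
  rfl

/-- Well-definedness of `matFun`: it can be computed from any unitary diagonalization. -/
lemma matFun_dec {U : Matrix d d ℂ} {g : d → ℝ} {A : Matrix d d ℂ} (h : Dec U g A)
    (f : ℝ → ℝ) :
    matFun f A = U * diagonal (fun i => ((f (g i) : ℝ) : ℂ)) * star U := by
  have hA : A.IsHermitian := h.isHermitian
  have hspec := dec_spectral hA
  -- interpolation polynomial on all relevant nodes
  set S : Finset ℝ := (Finset.image g Finset.univ) ∪ (Finset.image hA.eigenvalues Finset.univ)
    with hS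
  set p : Polynomial ℝ := Lagrange.interpolate S id f with hp
  have hnode : ∀ x ∈ S, p.eval x = f x := fun x hx =>
    Lagrange.eval_interpolate_at_node f (Set.injOn_id _) hx
  have key : ∀ (U' : Matrix d d ℂ) (g' : d → ℝ) (h' : Dec U' g' A),
      (∀ i, g' i ∈ S) → U' * diagonal (fun i => ((f (g' i) : ℝ) : ℂ)) * star U'
        = Polynomial.aeval A (p.map (algebraMap ℝ ℂ)) := by
    intro U' g' h' hmem
    rw [aeval_dec h' p]
    have hfun : (fun i => ((p.eval (g' i) : ℝ) : ℂ)) = fun i => ((f (g' i) : ℝ) : ℂ) := by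
      funext i; rw [hnode _ (hmem i)]
    rw [hfun]
  have e1 := key U g h (fun i => Finset.mem_union_left _
    (Finset.mem_image_of_mem g (Finset.mem_univ i)))
  have e2 := key (hA.eigenvectorUnitary : Matrix d d ℂ) hA.eigenvalues hspec
    (fun i => Finset.mem_union_right _
      (Finset.mem_image_of_mem hA.eigenvalues (Finset.mem_univ i)))
  rw [matFun, dif_pos hA, e2.trans e1.symm]

lemma trace_mul_re_nonneg {ρ M : Matrix d d ℂ} (hρ : ρ.PosSemidef)
    (hM : ∀ v, 0 ≤ (star v ⬝ᵥ M *ᵥ v).re) : 0 ≤ (Matrix.trace (ρ * M)).re := by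
  have hd := dec_spectral hρ.1
  rw [Matrix.trace_mul_comm, hd.trace_mul M, Complex.re_sum]
  apply Finset.sum_nonneg
  intro i _
  rw [Complex.re_ofReal_mul]
  refine mul_nonneg (hρ.eigenvalues_nonneg i) ?_
  rw [diag_entry_qf]
  exact hM _

lemma Dec.mul_inv_vec {U : Matrix d d ℂ} {μ : d → ℝ} {A iA : Matrix d d ℂ}
    (hA : Dec U μ A) (hiA : Dec U (fun i => (μ i)⁻¹) iA) (hμ : ∀ i, μ i ≠ 0)
    (v : d → ℂ) : A *ᵥ (iA *ᵥ v) = v := by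
  have hUw : U *ᵥ (star U *ᵥ v) = v := by
    rw [mulVec_mulVec, hA.mul_star_self, one_mulVec]
  have h1 : iA *ᵥ v = U *ᵥ (fun i => (((μ i)⁻¹ : ℝ) : ℂ) * (star U *ᵥ v) i) := by
    conv_lhs => rw [← hUw]
    exact hiA.mulVec_eq _
  rw [h1, hA.mulVec_eq]
  have h2 : (fun i => (μ i : ℂ) * ((((μ i)⁻¹ : ℝ) : ℂ) * (star U *ᵥ v) i)) = star U *ᵥ v := by
    funext i
    have : ((μ i : ℝ) : ℂ) ≠ 0 := by exact_mod_cast hμ i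
    push_cast
    field_simp
  rw [h2, mulVec_mulVec, hA.mul_star_self, one_mulVec]

/-- Completing-the-square: inverses reverse the (quadratic-form) order. -/
lemma inv_qf_le {U V : Matrix d d ℂ} {μ ν : d → ℝ} {A B iA iB : Matrix d d ℂ}
    (hA : Dec U μ A) (hB : Dec V ν B)
    (hiA : Dec U (fun i => (μ i)⁻¹) iA) (hiB : Dec V (fun i => (ν i)⁻¹) iB)
    (hμ : ∀ i, 0 < μ i) (hν : ∀ i, 0 < ν i)
    (hAB : ∀ w, (star w ⬝ᵥ A *ᵥ w).re ≤ (star w ⬝ᵥ B *ᵥ w).re) (v : d → ℂ) :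
    (star v ⬝ᵥ iB *ᵥ v).re ≤ (star v ⬝ᵥ iA *ᵥ v).re := by
  set x := iB *ᵥ v with hx
  set y := iA *ᵥ v with hy
  have hAy : A *ᵥ y = v := hA.mul_inv_vec hiA (fun i => (hμ i).ne') v
  have hBx : B *ᵥ x = v := hB.mul_inv_vec hiB (fun i => (hν i).ne') v
  have hherm : ∀ {W : Matrix d d ℂ}, W.IsHermitian → ∀ (a b : d → ℂ),
      star a ⬝ᵥ W *ᵥ b = star (W *ᵥ a) ⬝ᵥ b := by
    intro W hW a b
    rw [star_mulVec, hW.eq, dotProduct_mulVec]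
  -- expand E := ⟨x-y, A (x-y)⟩
  have hE : star (x - y) ⬝ᵥ A *ᵥ (x - y)
      = star x ⬝ᵥ A *ᵥ x - star x ⬝ᵥ v - star v ⬝ᵥ x + star v ⬝ᵥ y := by
    have h1 : star y ⬝ᵥ A *ᵥ x = star v ⬝ᵥ x := by
      rw [hherm hA.isHermitian y x, hAy]
    have h2 : star x ⬝ᵥ A *ᵥ y = star x ⬝ᵥ v := by rw [hAy]
    have h3 : star y ⬝ᵥ A *ᵥ y = star v ⬝ᵥ y := by
      rw [hherm hA.isHermitian y y, hAy]
    rw [Matrix.mulVec_sub, star_sub, sub_dotProduct, dotProduct_sub, dotProduct_sub,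
      h1, h2, h3]
    ring
  have hE0 : 0 ≤ (star (x - y) ⬝ᵥ A *ᵥ (x - y)).re := by
    rw [hA.qf]
    rw [Complex.ofReal_re]
    apply Finset.sum_nonneg
    intro i _
    exact mul_nonneg (hμ i).le (Complex.normSq_nonneg _)
  have hBxv : star x ⬝ᵥ v = star x ⬝ᵥ B *ᵥ x := by rw [hBx]
  have hvy : star v ⬝ᵥ y = star v ⬝ᵥ iA *ᵥ v := rfl
  have hvx : star v ⬝ᵥ x = star v ⬝ᵥ iB *ᵥ v := rfl
  have hcompare := hAB x
  have hre : (star (x - y) ⬝ᵥ A *ᵥ (x - y)).re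
      = (star x ⬝ᵥ A *ᵥ x).re - (star x ⬝ᵥ B *ᵥ x).re
        - (star v ⬝ᵥ iB *ᵥ v).re + (star v ⬝ᵥ iA *ᵥ v).re := by
    rw [hE, hBxv]
    simp [Complex.sub_re, Complex.add_re]
    rfl
  linarith [hE0, hcompare, hre.symm.le, hre.le]

open intervalIntegral in
lemma integral_shift_inv {a : ℝ} (ha : 0 < a) (T : ℝ) (hT : 0 ≤ T) :
    ∫ t in (0:ℝ)..T, (a + t)⁻¹ = Real.log (a + T) - Real.log a := by
  have h1 := intervalIntegral.integral_comp_add_left (a := 0) (b := T) (fun x => x⁻¹) a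
  rw [add_zero] at h1
  rw [h1, integral_inv, Real.log_div (by positivity) (by positivity)]
  exact Set.notMem_uIcc_of_lt ha (by positivity)

lemma cont_int {γ : ℝ} (hγ : 0 < γ) (c T : ℝ) (hT : 0 ≤ T) :
    IntervalIntegrable (fun t => c / (γ + t)) MeasureTheory.volume 0 T := by
  apply ContinuousOn.intervalIntegrable
  apply ContinuousOn.div continuousOn_const (by fun_prop)
  intro t ht
  rw [Set.uIcc_of_le hT] at ht
  have := ht.1
  positivity

lemma cont_int_sum {γ : d → ℝ} (hγ : ∀ i, 0 < γ i) (c : d → ℝ) (T : ℝ) (hT : 0 ≤ T) :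
    IntervalIntegrable (fun t => ∑ i, c i / (γ i + t)) MeasureTheory.volume 0 T := by
  apply ContinuousOn.intervalIntegrable
  apply continuousOn_finset_sum
  intro i _
  apply ContinuousOn.div continuousOn_const (by fun_prop)
  intro t ht
  rw [Set.uIcc_of_le hT] at ht
  have h1 := ht.1
  have h2 := hγ i
  positivity

lemma sum_int {γ : d → ℝ} (hγ : ∀ i, 0 < γ i) (c : d → ℝ) (T : ℝ) (hT : 0 ≤ T) :
    (∫ t in (0:ℝ)..T, ∑ i, c i / (γ i + t))
      = ∑ i, c i * (Real.log (γ i + T) - Real.log (γ i)) := by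
  rw [intervalIntegral.integral_finset_sum (fun i _ => cont_int (hγ i) (c i) T hT)]
  refine Finset.sum_congr rfl fun i _ => ?_
  simp_rw [div_eq_mul_inv]
  rw [intervalIntegral.integral_const_mul, integral_shift_inv (hγ i) T hT]

/-- Key scalar lemma: resolvent domination implies log-mean domination. -/
lemma sum_log_le (p q a b : d → ℝ) (hp : ∀ i, 0 ≤ p i) (hq : ∀ i, 0 ≤ q i)
    (ha : ∀ i, 0 < a i) (hb : ∀ i, 0 < b i)
    (hsum : ∑ i, p i = ∑ i, q i)
    (hpt : ∀ t : ℝ, 0 ≤ t → ∑ i, q i / (b i + t) ≤ ∑ i, p i / (a i + t)) :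
    ∑ i, p i * Real.log (a i) ≤ ∑ i, q i * Real.log (b i) := by
  set G : ℝ → ℝ :=
    fun T => (∑ i, p i * Real.log (a i / T + 1)) - ∑ i, q i * Real.log (b i / T + 1)
    with hG
  have key : ∀ T : ℝ, 0 < T →
      (∑ i, p i * Real.log (a i)) - (∑ i, q i * Real.log (b i)) ≤ G T := by
    intro T hT
    have hmono : (∫ t in (0:ℝ)..T, ∑ i, q i / (b i + t))
        ≤ ∫ t in (0:ℝ)..T, ∑ i, p i / (a i + t) := by
      apply intervalIntegral.integral_mono_on hT.le
      · exact cont_int_sum hb q T hT.le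
      · exact cont_int_sum ha p T hT.le
      · exact fun t ht => hpt t ht.1
    rw [sum_int ha p T hT.le, sum_int hb q T hT.le] at hmono
    have hlog : ∀ (γ : ℝ), 0 < γ → Real.log (γ + T) = Real.log (γ / T + 1) + Real.log T := by
      intro γ hγ
      rw [← Real.log_mul (by positivity) hT.ne']
      congr 1
      field_simp
    have e1 : ∑ i, p i * (Real.log (a i + T) - Real.log (a i))
        = (∑ i, p i * Real.log (a i / T + 1)) + (∑ i, p i) * Real.log T
          - ∑ i, p i * Real.log (a i) := by
      rw [Finset.sum_mul, ← Finset.sum_add_distrib, ← Finset.sum_sub_distrib]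
      refine Finset.sum_congr rfl fun i _ => ?_
      rw [hlog (a i) (ha i)]
      ring
    have e2 : ∑ i, q i * (Real.log (b i + T) - Real.log (b i))
        = (∑ i, q i * Real.log (b i / T + 1)) + (∑ i, q i) * Real.log T
          - ∑ i, q i * Real.log (b i) := by
      rw [Finset.sum_mul, ← Finset.sum_add_distrib, ← Finset.sum_sub_distrib]
      refine Finset.sum_congr rfl fun i _ => ?_
      rw [hlog (b i) (hb i)]
      ring
    rw [e1, e2, hsum] at hmono
    simp only [hG]
    linarith
  have hGlim : Filter.Tendsto G Filter.atTop (nhds 0) := by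
    have hterm : ∀ (γ : ℝ), Filter.Tendsto (fun T => Real.log (γ / T + 1))
        Filter.atTop (nhds 0) := by
      intro γ
      have h1 : Filter.Tendsto (fun T : ℝ => γ / T + 1) Filter.atTop (nhds 1) := by
        have := (tendsto_inv_atTop_zero (𝕜 := ℝ)).const_mul γ
        simp only [mul_zero] at this
        have h2 := this.add_const 1
        rw [zero_add] at h2
        simpa [div_eq_mul_inv] using h2
      have hc : ContinuousAt Real.log 1 := Real.continuousAt_log one_ne_zero
      have := hc.tendsto.comp h1
      rwa [Real.log_one] at this
    have h1 : Filter.Tendsto (fun T => ∑ i, p i * Real.log (a i / T + 1))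
        Filter.atTop (nhds 0) := by
      have := tendsto_finset_sum (Finset.univ : Finset d)
        (fun i _ => ((hterm (a i)).const_mul (p i)))
      simpa using this
    have h2 : Filter.Tendsto (fun T => ∑ i, q i * Real.log (b i / T + 1))
        Filter.atTop (nhds 0) := by
      have := tendsto_finset_sum (Finset.univ : Finset d)
        (fun i _ => ((hterm (b i)).const_mul (q i)))
      simpa using this
    have := h1.sub h2
    simpa using this
  have hfin : (∑ i, p i * Real.log (a i)) - (∑ i, q i * Real.log (b i)) ≤ 0 := by
    refine ge_of_tendsto hGlim ?_
    filter_upwards [Filter.eventually_gt_atTop 0] with T hT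
    exact key T hT
  linarith

lemma tendsto_sum_log {g P : d → ℝ} (hg : ∀ i, 0 ≤ g i)
    (hzero : ∀ i, g i = 0 → P i = 0) :
    Filter.Tendsto (fun ε : ℝ => ∑ i, P i * Real.log (g i + ε))
      (nhdsWithin 0 (Set.Ioi 0)) (nhds (∑ i, P i * Real.log (g i))) := by
  apply tendsto_finset_sum
  intro i _
  by_cases h : g i = 0
  · simp only [hzero i h, zero_mul]
    exact tendsto_const_nhds
  · have hgi : 0 < g i := lt_of_le_of_ne (hg i) (Ne.symm h)
    have h1 : Filter.Tendsto (fun ε : ℝ => g i + ε) (nhdsWithin 0 (Set.Ioi 0))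
        (nhds (g i)) := by
      have h0 : Continuous (fun ε : ℝ => g i + ε) := continuous_const.add continuous_id
      have := h0.tendsto (0 : ℝ)
      simp only [add_zero] at this
      exact this.mono_left nhdsWithin_le_nhds
    have h2 := (Real.continuousAt_log hgi.ne').tendsto.comp h1
    exact h2.const_mul (P i)

lemma diag_re_nonneg {M : Matrix d d ℂ} (h : M.PosSemidef) (i : d) :
    0 ≤ (M i i).re := by
  have h2 := h.dotProduct_mulVec_nonneg (Pi.single i 1)
  have h3 : star (Pi.single i (1:ℂ)) ⬝ᵥ M *ᵥ Pi.single i 1 = M i i := by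
    simp [dotProduct, mulVec, Pi.single_apply, Finset.sum_ite_eq]
  rw [h3] at h2
  simpa using (Complex.le_def.mp h2).1

lemma trace_re_nonneg {M : Matrix d d ℂ} (h : M.PosSemidef) :
    0 ≤ (Matrix.trace M).re := by
  rw [Matrix.trace, Complex.re_sum]
  exact Finset.sum_nonneg fun i _ => diag_re_nonneg h i

end QRE

namespace QRE

lemma one_dec {U : Matrix d d ℂ} (hU : U ∈ Matrix.unitaryGroup d ℂ) :
    Dec U (fun _ => 1) (1 : Matrix d d ℂ) := by
  refine ⟨hU, ?_⟩
  have : diagonal (fun _ : d => ((1:ℝ):ℂ)) = 1 := by simp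
  rw [this, Matrix.mul_one]
  exact ((Matrix.mem_unitaryGroup_iff).mp hU).symm

/-- The two basis expansions of `‖v‖²` agree. -/
lemma normSq_basis_eq {U V : Matrix d d ℂ}
    (hU : U ∈ Matrix.unitaryGroup d ℂ) (hV : V ∈ Matrix.unitaryGroup d ℂ) (v : d → ℂ) :
    ∑ i, Complex.normSq ((star U *ᵥ v) i) = ∑ j, Complex.normSq ((star V *ᵥ v) j) := by
  have e1 := (one_dec hU).qf v
  have e2 := (one_dec hV).qf v
  rw [e1] at e2
  have := Complex.ofReal_inj.mp e2
  simpa using this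

lemma key_bound (ρ ρ' σ : Matrix d d ℂ)
    (hρP : ρ.PosSemidef) (hρT : Matrix.trace ρ = 1)
    (hρ'P : ρ'.PosSemidef) (hρ'T : Matrix.trace ρ' = 1)
    (hσP : σ.PosSemidef) (hσT : Matrix.trace σ = 1)
    (h1 : SuppLE ρ σ) (h2 : SuppLE ρ ρ')
    (lam : ℝ) (hlam : (Real.exp lam • σ - ρ').PosSemidef) :
    (Matrix.trace (ρ * mlog ρ')).re - (Matrix.trace (ρ * mlog σ)).re ≤ lam := by
  classical
  -- spectral data
  have hρ'H : ρ'.IsHermitian := hρ'P.1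
  have hσH : σ.IsHermitian := hσP.1
  set W : Matrix d d ℂ := (hρ'H.eigenvectorUnitary : Matrix d d ℂ) with hW
  set r : d → ℝ := hρ'H.eigenvalues with hr
  have hdecρ' : Dec W r ρ' := dec_spectral hρ'H
  set V : Matrix d d ℂ := (hσH.eigenvectorUnitary : Matrix d d ℂ) with hV
  set s : d → ℝ := hσH.eigenvalues with hs
  have hdecσ : Dec V s σ := dec_spectral hσH
  have hrnn : ∀ i, 0 ≤ r i := fun i => hρ'P.eigenvalues_nonneg i
  have hsnn : ∀ j, 0 ≤ s j := fun j => hσP.eigenvalues_nonneg j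
  set P : d → ℝ := fun i => ((star W * ρ * W) i i).re with hP
  set Q : d → ℝ := fun j => ((star V * ρ * V) j j).re with hQ
  have hPnn : ∀ i, 0 ≤ P i := fun i => entry_re_nonneg hρP W i
  have hQnn : ∀ j, 0 ≤ Q j := fun j => entry_re_nonneg hρP V j
  have hsum_of_unitary : ∀ (U : Matrix d d ℂ), U ∈ Matrix.unitaryGroup d ℂ →
      ∑ i, ((star U * ρ * U) i i).re = 1 := by
    intro U hU
    have e : Matrix.trace (star U * ρ * U) = Matrix.trace ρ := by
      rw [Matrix.trace_mul_cycle, (Matrix.mem_unitaryGroup_iff).mp hU, Matrix.one_mul]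
    have e2 : ∑ i, ((star U * ρ * U) i i).re = (Matrix.trace (star U * ρ * U)).re := by
      rw [Matrix.trace, Complex.re_sum]; rfl
    rw [e2, e, hρT]; simp
  have hPsum : ∑ i, P i = 1 := hsum_of_unitary W hdecρ'.1
  have hQsum : ∑ j, Q j = 1 := hsum_of_unitary V hdecσ.1
  -- lam is nonnegative
  have hlam0 : 0 ≤ lam := by
    have h4 := trace_re_nonneg hlam
    have h5 : Matrix.trace (Real.exp lam • σ - ρ') = (Real.exp lam : ℂ) - 1 := by
      rw [Matrix.trace_sub, Matrix.trace_smul, hσT, hρ'T]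
      simp [Complex.real_smul]
    rw [h5] at h4
    simp only [Complex.sub_re, Complex.ofReal_re, Complex.one_re, sub_nonneg] at h4
    by_contra hneg
    push_neg at hneg
    have := Real.exp_lt_exp.mpr hneg
    rw [Real.exp_zero] at this
    linarith
  have hexp1 : (1:ℝ) ≤ Real.exp lam := by
    calc (1:ℝ) = Real.exp 0 := Real.exp_zero.symm
    _ ≤ Real.exp lam := Real.exp_le_exp.mpr hlam0
  -- qf dominance from hlam
  have hdom : ∀ w : d → ℂ,
      ∑ i, r i * Complex.normSq ((star W *ᵥ w) i)
        ≤ Real.exp lam * ∑ j, s j * Complex.normSq ((star V *ᵥ w) j) := by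
    intro w
    have h4 := hlam.dotProduct_mulVec_nonneg w
    have h5 : star w ⬝ᵥ (Real.exp lam • σ - ρ') *ᵥ w
        = ((Real.exp lam * ∑ j, s j * Complex.normSq ((star V *ᵥ w) j)
            - ∑ i, r i * Complex.normSq ((star W *ᵥ w) i) : ℝ) : ℂ) := by
      rw [Matrix.sub_mulVec, dotProduct_sub, Matrix.smul_mulVec, dotProduct_smul,
        hdecσ.qf w, hdecρ'.qf w]
      push_cast [Complex.real_smul]
      ring
    rw [h5] at h4
    have := (Complex.le_def.mp h4).1
    simpa [Complex.exp_ofReal_re] using this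
  -- zero-eigenvalue coefficients vanish
  have hcolzero : ∀ (U : Matrix d d ℂ) (g : d → ℝ) (A : Matrix d d ℂ) (hd : Dec U g A)
      (i : d), g i = 0 → A *ᵥ (fun a => U a i) = 0 := by
    intro U g A hd i hgi
    have hws : U *ᵥ Pi.single i 1 = fun a => U a i := by
      funext a; simp [mulVec_single]
    have h6 := hd.mulVec_eq (Pi.single i 1)
    rw [hws] at h6
    rw [h6]
    have h7 : (fun j => ((g j : ℝ) : ℂ) * (Pi.single i 1 : d → ℂ) j) = 0 := by
      funext j
      by_cases hj : j = i
      · subst hj; simp [hgi]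
      · simp [Pi.single_apply, hj]
    rw [h7, mulVec_zero]
  have hPzero : ∀ i, r i = 0 → P i = 0 := by
    intro i hri
    have hc := hcolzero W r ρ' hdecρ' i hri
    have := entry_eq_zero W i (h2 _ hc)
    simp [hP, this]
  have hQzero : ∀ j, s j = 0 → Q j = 0 := by
    intro j hsj
    have hc := hcolzero V s σ hdecσ j hsj
    have := entry_eq_zero V j (h1 _ hc)
    simp [hQ, this]
  -- trace formulas
  have htrace_formula : ∀ (U : Matrix d d ℂ) (g : d → ℝ) (hU : U ∈ Matrix.unitaryGroup d ℂ),
      (Matrix.trace (ρ * (U * diagonal (fun i => ((g i : ℝ) : ℂ)) * star U))).re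
        = ∑ i, ((star U * ρ * U) i i).re * g i := by
    intro U g hU
    rw [Dec.trace_mul ⟨hU, rfl⟩ ρ, Complex.re_sum]
    exact Finset.sum_congr rfl fun i _ => by rw [Complex.re_ofReal_mul]; ring
  have hLρ' : (Matrix.trace (ρ * mlog ρ')).re = ∑ i, P i * Real.log (r i) := by
    rw [mlog, matFun_dec hdecρ' Real.log, htrace_formula W (fun i => Real.log (r i)) hdecρ'.1]
  have hLσ : (Matrix.trace (ρ * mlog σ)).re = ∑ j, Q j * Real.log (s j) := by
    rw [mlog, matFun_dec hdecσ Real.log, htrace_formula V (fun j => Real.log (s j)) hdecσ.1]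
  -- main per-ε inequality
  have main_eps : ∀ ε : ℝ, 0 < ε →
      ∑ i, P i * Real.log (r i + ε) ≤ lam + ∑ j, Q j * Real.log (s j + ε) := by
    intro ε hε
    have hpt : ∀ t : ℝ, 0 ≤ t →
        ∑ j, Q j / (Real.exp lam * (s j + ε) + t) ≤ ∑ i, P i / (r i + ε + t) := by
      intro t ht
      set μ : d → ℝ := fun i => r i + ε + t with hμdef
      set ν : d → ℝ := fun j => Real.exp lam * (s j + ε) + t with hνdef
      have hμ : ∀ i, 0 < μ i := fun i => by
        have := hrnn i; simp only [hμdef]; positivity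
      have hν : ∀ j, 0 < ν j := fun j => by
        have := hsnn j; have := Real.exp_pos lam; simp only [hνdef]; positivity
      set At : Matrix d d ℂ := W * diagonal (fun i => ((μ i : ℝ) : ℂ)) * star W with hAtdef
      set Bt : Matrix d d ℂ := V * diagonal (fun j => ((ν j : ℝ) : ℂ)) * star V with hBtdef
      set iAt : Matrix d d ℂ := W * diagonal (fun i => (((μ i)⁻¹ : ℝ) : ℂ)) * star W with hiAtdef
      set iBt : Matrix d d ℂ := V * diagonal (fun j => (((ν j)⁻¹ : ℝ) : ℂ)) * star V with hiBtdef
      have hdAt : Dec W μ At := ⟨hdecρ'.1, rfl⟩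
      have hdBt : Dec V ν Bt := ⟨hdecσ.1, rfl⟩
      have hdiAt : Dec W (fun i => (μ i)⁻¹) iAt := ⟨hdecρ'.1, rfl⟩
      have hdiBt : Dec V (fun j => (ν j)⁻¹) iBt := ⟨hdecσ.1, rfl⟩
      have hABt : ∀ w, (star w ⬝ᵥ At *ᵥ w).re ≤ (star w ⬝ᵥ Bt *ᵥ w).re := by
        intro w
        rw [hdAt.qf w, hdBt.qf w, Complex.ofReal_re, Complex.ofReal_re]
        set n : d → ℝ := fun i => Complex.normSq ((star W *ᵥ w) i) with hn
        set n' : d → ℝ := fun j => Complex.normSq ((star V *ᵥ w) j) with hn'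
        have hnn : ∀ i, 0 ≤ n i := fun i => Complex.normSq_nonneg _
        have hnn' : ∀ j, 0 ≤ n' j := fun j => Complex.normSq_nonneg _
        have hN : ∑ i, n i = ∑ j, n' j := normSq_basis_eq hdecρ'.1 hdecσ.1 w
        have e1 : ∑ i, μ i * n i = (∑ i, r i * n i) + (ε + t) * ∑ i, n i := by
          rw [Finset.mul_sum, ← Finset.sum_add_distrib]
          exact Finset.sum_congr rfl fun i _ => by simp only [hμdef]; ring
        have e2 : ∑ j, ν j * n' j
            = Real.exp lam * (∑ j, s j * n' j) + (Real.exp lam * ε + t) * ∑ j, n' j := by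
          rw [Finset.mul_sum, Finset.mul_sum, ← Finset.sum_add_distrib]
          exact Finset.sum_congr rfl fun j _ => by simp only [hνdef]; ring
        have hd : ∑ i, r i * n i ≤ Real.exp lam * ∑ j, s j * n' j := hdom w
        have hNnn : 0 ≤ ∑ i, n i := Finset.sum_nonneg fun i _ => hnn i
        rw [e1, e2, ← hN]
        nlinarith [hNnn, hd, hexp1, hε.le, ht,
          mul_nonneg (mul_nonneg (sub_nonneg.mpr hexp1) hε.le) hNnn]
      have hiAB := inv_qf_le hdAt hdBt hdiAt hdiBt hμ hν hABt
      have htr : 0 ≤ (Matrix.trace (ρ * (iAt - iBt))).re := by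
        apply trace_mul_re_nonneg hρP
        intro v
        rw [Matrix.sub_mulVec, dotProduct_sub, Complex.sub_re]
        have := hiAB v
        linarith
      rw [Matrix.mul_sub, Matrix.trace_sub, Complex.sub_re] at htr
      have eA : (Matrix.trace (ρ * iAt)).re = ∑ i, P i / (r i + ε + t) := by
        rw [hiAtdef, htrace_formula W (fun i => (μ i)⁻¹) hdecρ'.1]
        exact Finset.sum_congr rfl fun i _ => by rw [div_eq_mul_inv]
      have eB : (Matrix.trace (ρ * iBt)).re
          = ∑ j, Q j / (Real.exp lam * (s j + ε) + t) := by
        rw [hiBtdef, htrace_formula V (fun j => (ν j)⁻¹) hdecσ.1]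
        exact Finset.sum_congr rfl fun j _ => by rw [div_eq_mul_inv]
      rw [eA, eB] at htr
      linarith
    have happ := sum_log_le P Q (fun i => r i + ε) (fun j => Real.exp lam * (s j + ε))
      hPnn hQnn (fun i => by have := hrnn i; positivity)
      (fun j => by have := hsnn j; have := Real.exp_pos lam; positivity)
      (hPsum.trans hQsum.symm) hpt
    have hlog : ∀ j, Real.log (Real.exp lam * (s j + ε)) = lam + Real.log (s j + ε) := by
      intro j
      rw [Real.log_mul (Real.exp_pos lam).ne' (by have := hsnn j; positivity), Real.log_exp]
    calc ∑ i, P i * Real.log (r i + ε)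
        ≤ ∑ j, Q j * Real.log (Real.exp lam * (s j + ε)) := happ
      _ = ∑ j, (Q j * lam + Q j * Real.log (s j + ε)) := by
          refine Finset.sum_congr rfl fun j _ => ?_
          rw [hlog j]; ring
      _ = lam + ∑ j, Q j * Real.log (s j + ε) := by
          rw [Finset.sum_add_distrib, ← Finset.sum_mul, hQsum]; ring
  -- take the limit ε → 0⁺
  have hXlim := tendsto_sum_log (g := r) (P := P) hrnn hPzero
  have hYlim := tendsto_sum_log (g := s) (P := Q) hsnn hQzero
  have hfin : ∑ i, P i * Real.log (r i) ≤ lam + ∑ j, Q j * Real.log (s j) := by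
    refine le_of_tendsto_of_tendsto hXlim (tendsto_const_nhds.add hYlim) ?_
    filter_upwards [self_mem_nhdsWithin] with ε hε
    exact main_eps ε hε
  rw [hLρ', hLσ]
  linarith

lemma sum_eigen_eq_one {ρ' : Matrix d d ℂ} (hH : ρ'.IsHermitian)
    (hT : Matrix.trace ρ' = 1) : ∑ i, hH.eigenvalues i = 1 := by
  have hdec := dec_spectral hH
  have h := hdec.trace_mul 1
  rw [Matrix.one_mul] at h
  have h2 : star (hH.eigenvectorUnitary : Matrix d d ℂ) * 1 *
      (hH.eigenvectorUnitary : Matrix d d ℂ) = 1 := by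
    rw [Matrix.mul_one, hdec.star_mul_self]
  rw [h2, hT] at h
  have h3 : (1 : ℂ) = ((∑ i, hH.eigenvalues i : ℝ) : ℂ) := by
    rw [h]
    push_cast
    exact Finset.sum_congr rfl fun i _ => by simp [Matrix.one_apply]
  exact_mod_cast h3.symm

lemma dmax_nonempty (ρ' σ : Matrix d d ℂ)
    (hρ'P : ρ'.PosSemidef) (hρ'T : Matrix.trace ρ' = 1)
    (hσP : σ.PosSemidef) (h3 : SuppLE ρ' σ) :
    ∃ lam : ℝ, (Real.exp lam • σ - ρ').PosSemidef := by
  classical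
  have hρ'H : ρ'.IsHermitian := hρ'P.1
  have hσH : σ.IsHermitian := hσP.1
  set W : Matrix d d ℂ := (hρ'H.eigenvectorUnitary : Matrix d d ℂ) with hWdef
  set r : d → ℝ := hρ'H.eigenvalues with hrdef
  have hdecρ' : Dec W r ρ' := dec_spectral hρ'H
  set V : Matrix d d ℂ := (hσH.eigenvectorUnitary : Matrix d d ℂ) with hVdef
  set s : d → ℝ := hσH.eigenvalues with hsdef
  have hdecσ : Dec V s σ := dec_spectral hσH
  have hrnn : ∀ i, 0 ≤ r i := fun i => hρ'P.eigenvalues_nonneg i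
  have hsnn : ∀ j, 0 ≤ s j := fun j => hσP.eigenvalues_nonneg j
  have hrsum : ∑ i, r i = 1 := sum_eigen_eq_one hρ'H hρ'T
  set c0 : ℝ := ∑ j, (if 0 < s j then (s j)⁻¹ else 0) with hc0def
  have hc0nn : 0 ≤ c0 := Finset.sum_nonneg fun j _ => by split <;> positivity
  set c : ℝ := max 1 c0 with hcdef
  have hc1 : (1:ℝ) ≤ c := le_max_left _ _
  have hcpos : (0:ℝ) < c := lt_of_lt_of_le one_pos hc1
  -- pointwise bound
  have claim : ∀ v : d → ℂ,
      (star v ⬝ᵥ ρ' *ᵥ v).re ≤ c * (star v ⬝ᵥ σ *ᵥ v).re := by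
    intro v
    set w : d → ℂ := star V *ᵥ v with hwdef
    have hVw : V *ᵥ w = v := by
      rw [hwdef, mulVec_mulVec, hdecσ.mul_star_self, one_mulVec]
    set w0 : d → ℂ := fun j => if s j = 0 then 0 else w j with hw0def
    set w1 : d → ℂ := fun j => if s j = 0 then w j else 0 with hw1def
    have hw01 : w = w0 + w1 := by
      funext j; by_cases h : s j = 0 <;> simp [hw0def, hw1def, h]
    set v0 : d → ℂ := V *ᵥ w0 with hv0def
    set v1 : d → ℂ := V *ᵥ w1 with hv1def
    have hv01 : v = v0 + v1 := by rw [hv0def, hv1def, ← mulVec_add, ← hw01, hVw]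
    have hσv1 : σ *ᵥ v1 = 0 := by
      rw [hv1def, hdecσ.mulVec_eq w1]
      have : (fun j => ((s j : ℝ) : ℂ) * w1 j) = 0 := by
        funext j
        by_cases h : s j = 0
        · simp [h]
        · simp [hw1def, h]
      rw [this, mulVec_zero]
    have hρ'v1 : ρ' *ᵥ v1 = 0 := h3 _ hσv1
    have hsplit : star v ⬝ᵥ ρ' *ᵥ v = star v0 ⬝ᵥ ρ' *ᵥ v0 := by
      have hcross : star v1 ⬝ᵥ ρ' *ᵥ v0 = 0 := by
        have h5 : star v1 ᵥ* ρ' = 0 := by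
          have h6 : star (ρ' *ᵥ v1) = star v1 ᵥ* ρ'ᴴ := star_mulVec ρ' v1
          rw [hρ'v1, hρ'H.eq] at h6
          simpa using h6.symm
        rw [dotProduct_mulVec, h5, zero_dotProduct]
      rw [hv01, Matrix.mulVec_add, hρ'v1, add_zero, star_add, add_dotProduct, hcross, add_zero]
    have hrle : ∀ i, r i ≤ 1 := fun i => by
      calc r i ≤ ∑ k, r k := Finset.single_le_sum (fun k _ => hrnn k) (Finset.mem_univ i)
        _ = 1 := hrsum
    have hVv0 : star V *ᵥ v0 = w0 := by
      rw [hv0def, mulVec_mulVec, hdecσ.star_mul_self, one_mulVec]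
    have hb1 : (star v0 ⬝ᵥ ρ' *ᵥ v0).re ≤ ∑ j, Complex.normSq (w0 j) := by
      rw [hdecρ'.qf v0, Complex.ofReal_re]
      have hWV := normSq_basis_eq hdecρ'.1 hdecσ.1 v0
      calc ∑ i, r i * Complex.normSq ((star W *ᵥ v0) i)
          ≤ ∑ i, 1 * Complex.normSq ((star W *ᵥ v0) i) :=
            Finset.sum_le_sum fun i _ =>
              mul_le_mul_of_nonneg_right (hrle i) (Complex.normSq_nonneg _)
        _ = ∑ i, Complex.normSq ((star W *ᵥ v0) i) := by simp
        _ = ∑ j, Complex.normSq ((star V *ᵥ v0) j) := hWV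
        _ = ∑ j, Complex.normSq (w0 j) := by rw [hVv0]
    have hqσre : (star v ⬝ᵥ σ *ᵥ v).re = ∑ k, s k * Complex.normSq (w k) := by
      rw [hdecσ.qf v, Complex.ofReal_re]
    have hσnn : 0 ≤ (star v ⬝ᵥ σ *ᵥ v).re := by
      have h7 := hσP.dotProduct_mulVec_nonneg v
      simpa using (Complex.le_def.mp h7).1
    have hb2 : ∑ j, Complex.normSq (w0 j) ≤ c0 * (star v ⬝ᵥ σ *ᵥ v).re := by
      rw [hc0def, Finset.sum_mul]
      apply Finset.sum_le_sum
      intro j _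
      by_cases h : s j = 0
      · have : w0 j = 0 := by simp [hw0def, h]
        rw [this]
        have : ¬ (0 < s j) := by rw [h]; exact lt_irrefl 0
        rw [if_neg this, zero_mul]
        simp
      · have hsj : 0 < s j := lt_of_le_of_ne (hsnn j) (Ne.symm h)
        rw [if_pos hsj]
        have hw0j : w0 j = w j := by simp [hw0def, h]
        have hterm : s j * Complex.normSq (w j) ≤ ∑ k, s k * Complex.normSq (w k) :=
          Finset.single_le_sum
            (fun k _ => mul_nonneg (hsnn k) (Complex.normSq_nonneg _)) (Finset.mem_univ j)
        calc Complex.normSq (w0 j) = (s j)⁻¹ * (s j * Complex.normSq (w j)) := by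
              rw [hw0j]; field_simp
          _ ≤ (s j)⁻¹ * (star v ⬝ᵥ σ *ᵥ v).re := by
              rw [hqσre]
              exact mul_le_mul_of_nonneg_left hterm (inv_nonneg.mpr (hsnn j))
    calc (star v ⬝ᵥ ρ' *ᵥ v).re = (star v0 ⬝ᵥ ρ' *ᵥ v0).re := by rw [hsplit]
      _ ≤ ∑ j, Complex.normSq (w0 j) := hb1
      _ ≤ c0 * (star v ⬝ᵥ σ *ᵥ v).re := hb2
      _ ≤ c * (star v ⬝ᵥ σ *ᵥ v).re :=
          mul_le_mul_of_nonneg_right (le_max_right 1 c0) hσnn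
  refine ⟨Real.log c, ?_⟩
  rw [Real.exp_log hcpos]
  refine Matrix.PosSemidef.of_dotProduct_mulVec_nonneg ?_ ?_
  · have h1 : (c • σ)ᴴ = c • σ := by
      have h2 : σᴴ = σ := hσH
      rw [Matrix.conjTranspose_smul, star_trivial, h2]
    exact Matrix.IsHermitian.sub h1 hρ'H
  · intro v
    have him : star v ⬝ᵥ (c • σ - ρ') *ᵥ v
        = ((c * (∑ k, s k * Complex.normSq ((star V *ᵥ v) k))
            - ∑ i, r i * Complex.normSq ((star W *ᵥ v) i) : ℝ) : ℂ) := by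
      rw [Matrix.sub_mulVec, dotProduct_sub, Matrix.smul_mulVec, dotProduct_smul,
        hdecσ.qf v, hdecρ'.qf v, Complex.real_smul]
      push_cast
      ring
    rw [him]
    rw [Complex.zero_le_real]
    have hcl := claim v
    rw [hdecσ.qf v, hdecρ'.qf v, Complex.ofReal_re, Complex.ofReal_re] at hcl
    linarith

end QRE

/-- For density operators `ρ, ρ', σ` (with the appropriate support
conditions), `D(ρ‖σ) ≤ D(ρ‖ρ') + D_max(ρ'‖σ)`. -/
theorem qRelEnt_le_qRelEnt_add_dmax
    (ρ ρ' σ : Matrix d d ℂ)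
    (hρ : IsDensity ρ) (hρ' : IsDensity ρ') (hσ : IsDensity σ)
    (h1 : SuppLE ρ σ) (h2 : SuppLE ρ ρ') (h3 : SuppLE ρ' σ) :
    qRelEnt ρ σ ≤ qRelEnt ρ ρ' + Dmax ρ' σ := by
  obtain ⟨hρP, hρT⟩ := hρ
  obtain ⟨hρ'P, hρ'T⟩ := hρ'
  obtain ⟨hσP, hσT⟩ := hσ
  have hne : {lam : ℝ | (Real.exp lam • σ - ρ').PosSemidef}.Nonempty :=
    QRE.dmax_nonempty ρ' σ hρ'P hρ'T hσP h3
  have hkey : ∀ lam ∈ {lam : ℝ | (Real.exp lam • σ - ρ').PosSemidef},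
      (Matrix.trace (ρ * mlog ρ')).re - (Matrix.trace (ρ * mlog σ)).re ≤ lam :=
    fun lam hlam => QRE.key_bound ρ ρ' σ hρP hρT hρ'P hρ'T hσP hσT h1 h2 lam hlam
  have hDmax : (Matrix.trace (ρ * mlog ρ')).re - (Matrix.trace (ρ * mlog σ)).re
      ≤ Dmax ρ' σ := le_csInf hne hkey
  have e1 : qRelEnt ρ σ = (Matrix.trace (ρ * mlog ρ)).re - (Matrix.trace (ρ * mlog σ)).re := by
    rw [qRelEnt, Matrix.mul_sub, Matrix.trace_sub, Complex.sub_re]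
  have e2 : qRelEnt ρ ρ' = (Matrix.trace (ρ * mlog ρ)).re - (Matrix.trace (ρ * mlog ρ')).re := by
    rw [qRelEnt, Matrix.mul_sub, Matrix.trace_sub, Complex.sub_re]
  rw [e1, e2]
  linarith
end

section
/- Grid covering of types: fix n ≥ 1, alphabet size d ≥ 2, and an integer t with 1 ≤ t ≤ n. Partition each of the d−1 free coordinates of the type grid [0,n]^{d−1} into t intervals of length n/t. Then every type f of a length-n sequence has a representative type g (a 'center' of its subgrid) such that the neighbor distance (half the L1 distance between type vectors) between f and g is at most (d−1)n/t, and the number of representatives is at most t^{d−1}. -/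
/-!
Cut `[0, n]` into the `t` cells `[k (n + 1) / t, (k + 1) (n + 1) / t)` and round each of the
first `d - 1` coordinates of a type down to the least integer in its cell. Each of them drops by
at most `n / t` (a drop `δ` with `t δ < n + 1`), and the last coordinate, which absorbs the total
drop, keeps the result a type. The first `d - 1` coordinates all move down and the last one moves
up by the same total, so half the `ℓ₁`-distance equals that total, at most `(d - 1) n / t`. The
rounded types are determined by the cells of their first `d - 1` coordinates, so there are at most
`t ^ (d - 1)` of them.
-/

open Finset

namespace GridCovering

def cell (n t m : ℕ) : ℕ := m * t / (n + 1)

def corner (n t k : ℕ) : ℕ := (k * (n + 1)) ⌈/⌉ t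

def snap (n t m : ℕ) : ℕ := corner n t (cell n t m)

section Snap

variable {n t m : ℕ}

lemma cell_lt (ht : 0 < t) (hm : m ≤ n) : cell n t m < t :=
  Nat.div_lt_of_lt_mul (by nlinarith)

lemma snap_le (ht : 0 < t) : snap n t m ≤ m := by
  rw [snap, corner, ceilDiv_le_iff_le_mul ht, mul_comm t]
  exact Nat.div_mul_le_self _ _

lemma mul_sub_snap_le (ht : 0 < t) : t * (m - snap n t m) ≤ n := by
  have hcorner : cell n t m * (n + 1) ≤ t * snap n t m := le_smul_ceilDiv ht
  have hcell : m * t < (n + 1) * (cell n t m + 1) := Nat.lt_mul_div_succ _ n.succ_pos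
  have : t * m ≤ t * snap n t m + n := by nlinarith
  rw [Nat.mul_sub]
  omega

lemma sub_snap_le_div (ht : 0 < t) : (m : ℝ) - snap n t m ≤ n / t := by
  have ht' : (0 : ℝ) < t := by exact_mod_cast ht
  have h : ((t * (m - snap n t m) : ℕ) : ℝ) ≤ n := by exact_mod_cast mul_sub_snap_le ht
  rw [Nat.cast_mul, Nat.cast_sub (snap_le ht)] at h
  rw [le_div_iff₀ ht']
  linarith

end Snap

def completeType {d : ℕ} (n : ℕ) (c : Fin d → ℕ) : Fin (d + 1) → ℕ :=
  Fin.snoc c (n - ∑ i, c i)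

section CompleteType

variable {d n : ℕ} {c : Fin d → ℕ} {f : Fin (d + 1) → ℕ}

lemma completeType_mem_antidiagonalTuple (hc : ∑ i, c i ≤ n) :
    completeType n c ∈ Finset.Nat.antidiagonalTuple (d + 1) n := by
  rw [Finset.Nat.mem_antidiagonalTuple, Fin.sum_univ_castSucc]
  simp only [completeType, Fin.snoc_castSucc, Fin.snoc_last]
  omega

lemma sum_abs_sub_completeType (hf : ∑ i, f i = n) (hc : ∀ i, c i ≤ f i.castSucc) :
    ∑ i, |(f i : ℝ) - completeType n c i| = 2 * ∑ i, ((f i.castSucc : ℝ) - c i) := by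
  rw [Fin.sum_univ_castSucc] at hf ⊢
  simp only [completeType, Fin.snoc_castSucc, Fin.snoc_last]
  have hdrop_nonneg : ∀ i, 0 ≤ (f i.castSucc : ℝ) - c i :=
    fun i => sub_nonneg.2 (Nat.cast_le.2 (hc i))
  have hsum : ∑ i, c i ≤ ∑ i : Fin d, f i.castSucc := sum_le_sum fun i _ => hc i
  have hlast :
      ((n - ∑ i, c i : ℕ) : ℝ) = f (Fin.last d) + ∑ i, ((f i.castSucc : ℝ) - c i) := by
    rw [sum_sub_distrib, Nat.cast_sub (by omega), ← hf]
    push_cast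
    ring
  rw [sum_congr rfl fun i _ => abs_of_nonneg (hdrop_nonneg i), hlast, sub_add_cancel_left, abs_neg,
    abs_of_nonneg (sum_nonneg fun i _ => hdrop_nonneg i)]
  ring

def snapType {d : ℕ} (n t : ℕ) (f : Fin (d + 1) → ℕ) : Fin (d + 1) → ℕ :=
  completeType n fun i => snap n t (f i.castSucc)

lemma snapType_mem_antidiagonalTuple {t : ℕ} (ht : 0 < t) (hf : ∑ i, f i = n) :
    snapType n t f ∈ Finset.Nat.antidiagonalTuple (d + 1) n := by
  refine completeType_mem_antidiagonalTuple ((sum_le_sum fun i _ => snap_le ht).trans ?_)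
  rw [← hf, Fin.sum_univ_castSucc]
  exact Nat.le_add_right _ _

lemma sum_abs_sub_snapType_le {t : ℕ} (ht : 0 < t) (hf : ∑ i, f i = n) :
    (∑ i, |(f i : ℝ) - snapType n t f i|) / 2 ≤ d * n / t := by
  rw [snapType, sum_abs_sub_completeType hf fun _ => snap_le ht,
    mul_div_cancel_left₀ _ two_ne_zero]
  calc ∑ i : Fin d, ((f i.castSucc : ℝ) - snap n t (f i.castSucc))
      ≤ ∑ _i : Fin d, (n : ℝ) / t := sum_le_sum fun _ _ => sub_snap_le_div ht
    _ = d * n / t := by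
      rw [sum_const, card_univ, Fintype.card_fin, nsmul_eq_mul, mul_div_assoc]

end CompleteType

end GridCovering

open GridCovering

theorem grid_covering_of_types_general (n d t : ℕ)
    (hd : 2 ≤ d) (ht1 : 1 ≤ t) :
    ∃ R : Finset (Fin d → ℕ),
      R ⊆ Finset.Nat.antidiagonalTuple d n ∧
      R.card ≤ t ^ (d - 1) ∧
      ∀ f ∈ Finset.Nat.antidiagonalTuple d n, ∃ g ∈ R,
        (∑ i, |(f i : ℝ) - (g i : ℝ)|) / 2 ≤ ((d : ℝ) - 1) * n / t := by
  obtain ⟨d, rfl⟩ : ∃ d', d = d' + 1 := ⟨d - 1, by omega⟩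
  let G : (Fin d → Fin t) → Fin (d + 1) → ℕ :=
    fun b => completeType n fun i => corner n t (b i)
  refine ⟨univ.image G ∩ Finset.Nat.antidiagonalTuple (d + 1) n, inter_subset_right, ?_,
    fun f hf => ?_⟩
  · calc _ ≤ (univ.image G).card := card_le_card inter_subset_left
      _ ≤ t ^ d := card_image_le.trans (by simp)
  rw [Finset.Nat.mem_antidiagonalTuple] at hf
  have hfn : ∀ i, f i ≤ n := fun i => hf ▸ single_le_sum (fun _ _ => zero_le) (mem_univ i)
  let b : Fin d → Fin t := fun i => ⟨cell n t (f i.castSucc), cell_lt ht1 (hfn _)⟩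
  have hb : G b = snapType n t f := rfl
  refine ⟨G b, mem_inter.2 ⟨mem_image_of_mem _ (mem_univ b),
    hb ▸ snapType_mem_antidiagonalTuple ht1 hf⟩, ?_⟩
  rw [hb, Nat.cast_succ, add_sub_cancel_right]
  exact sum_abs_sub_snapType_le ht1 hf

/-- Grid covering of types: for `n ≥ 1`, alphabet size `d ≥ 2` and an
integer grid parameter `1 ≤ t ≤ n`, there is a set `R` of representative types with
`|R| ≤ t^(d−1)` such that every type `f` of a length-`n` sequence has a representative
`g ∈ R` within neighbor distance (half the `ℓ₁`-distance of the type vectors) at most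
`(d−1)·n/t`. -/
theorem grid_covering_of_types (n d t : ℕ)
    (hn : 1 ≤ n) (hd : 2 ≤ d) (ht1 : 1 ≤ t) (htn : t ≤ n) :
    ∃ R : Finset (Fin d → ℕ),
      R ⊆ Finset.Nat.antidiagonalTuple d n ∧
      R.card ≤ t ^ (d - 1) ∧
      ∀ f ∈ Finset.Nat.antidiagonalTuple d n, ∃ g ∈ R,
        (∑ i, |(f i : ℝ) - (g i : ℝ)|) / 2 ≤ ((d : ℝ) - 1) * n / t :=
  grid_covering_of_types_general n d t hd ht1
end
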